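/- If R is a real quadratically closed field and x ∈ R^× with x > 0, then ⟨−1⟩[x] = [x] in the refined pre-Bloch group RP(R). -/

import Mathlib

open scoped Classical

variable (F : Type) [Field F]

/-- The subgroup of squares in `F^×`. -/
def sqSubgroup : Subgroup Fˣ := MonoidHom.range (powMonoidHom 2 : Fˣ →* Fˣ)

/-- The square class group `F^×/(F^×)²`. -/
def SqClassGroup : Type := Fˣ ⧸ sqSubgroup F

instance : CommGroup (SqClassGroup F) := inferInstanceAs (CommGroup (Fˣ ⧸ sqSubgroup F))

/-- The group ring `R_F = ℤ[F^×/(F^×)²]`. -/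
abbrev GrpRing := MonoidAlgebra ℤ (SqClassGroup F)

/-- `⟨x⟩ ∈ R_F`, the square class of `x ∈ F^×` (with the junk convention `⟨0⟩ = 1`). -/
noncomputable def cls (x : F) : GrpRing F :=
  if h : x = 0 then 1
  else MonoidAlgebra.of ℤ (SqClassGroup F)
    (QuotientGroup.mk (Units.mk0 x h) : Fˣ ⧸ sqSubgroup F)

/-- The relators of the refined pre-Bloch group: `[0]`, `[1]` and the refined five-term
relators `S_{x,y}`, inside the free `R_F`-module on the set `F` of generator labels. -/
noncomputable def refinedRels : Set (F →₀ GrpRing F) :=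
  {Finsupp.single (0 : F) 1, Finsupp.single (1 : F) 1} ∪
  {z | ∃ x y : F, x ≠ 0 ∧ x ≠ 1 ∧ y ≠ 0 ∧ y ≠ 1 ∧ x ≠ y ∧
    z = Finsupp.single x 1 - Finsupp.single y 1
        + Finsupp.single (y / x) (cls F x)
        - Finsupp.single ((1 - x⁻¹) / (1 - y⁻¹)) (cls F (x⁻¹ - 1))
        + Finsupp.single ((1 - x) / (1 - y)) (cls F (1 - x))}

/-- The refined pre-Bloch group `RP(F)`: the `R_F`-module with generators `[x]`, `x ∈ F^×`,
subject to `[1] = 0` and the refined five-term relations `S_{x,y}`. -/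
abbrev RP := (F →₀ GrpRing F) ⧸ Submodule.span (GrpRing F) (refinedRels F)

/-- The generator `[x]` of `RP(F)`. -/
noncomputable def gen (x : F) : RP F :=
  Submodule.Quotient.mk (Finsupp.single x 1)

/-- `ψ₁(x) = [x] + ⟨-1⟩[x⁻¹]`. -/
noncomputable def psi1 (x : F) : RP F := gen F x + cls F (-1) • gen F x⁻¹

/-- `ψ₂(x) = ⟨x⁻¹-1⟩[x] + ⟨1-x⟩[x⁻¹]` for `x ≠ 1`, and `ψ₂(1) = 0`. -/
noncomputable def psi2 (x : F) : RP F :=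
  if x = 1 then 0 else cls F (x⁻¹ - 1) • gen F x + cls F (1 - x) • gen F x⁻¹


/-! In a real quadratically closed field the square class `⟨u⟩` of `u ≠ 0` is `1` for `u > 0`
and `ε = ⟨-1⟩` for `u < 0`, with `ε² = 1`. As `(ε - 1)(1 + ε) = 0`, it suffices to show that
`[x]` lies in `(1 + ε) • RP(R)` up to `ε`-invariant elements. Write `x = a²` with `a > 0`. For
`a < 1` the combination `S_{a⁻¹,a} + S_{a,-a} - S_{a⁻¹,-a⁻¹}` of five-term relations reads
`[a²] = (1 + ε) • w`. For `a > 1`, adding `S_{a,a⁻¹}` and `S_{-a,-a⁻¹}` gives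
`[a²] + (1 - ε) • [a⁻¹] ∈ (1 + ε) • RP(R)`, and `[a⁻¹]` is `ε`-invariant by the first case. -/

section SquareClasses

variable {F}

lemma cls_mul {x y : F} (hx : x ≠ 0) (hy : y ≠ 0) : cls F (x * y) = cls F x * cls F y := by
  simp only [cls, dif_neg (mul_ne_zero hx hy), dif_neg hx, dif_neg hy, Units.mk0_mul]
  exact map_mul (MonoidAlgebra.of ℤ (SqClassGroup F))
    (QuotientGroup.mk (Units.mk0 x hx)) (QuotientGroup.mk (Units.mk0 y hy))

lemma cls_sq {a : F} (ha : a ≠ 0) : cls F (a ^ 2) = 1 := by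
  rw [cls, dif_neg (pow_ne_zero 2 ha), ← map_one (MonoidAlgebra.of ℤ (SqClassGroup F))]
  congr 1
  exact (QuotientGroup.eq_one_iff _).2 ⟨Units.mk0 a ha, by ext; simp⟩

lemma cls_mul_self {x : F} (hx : x ≠ 0) : cls F x * cls F x = 1 := by
  rw [← cls_mul hx hx, ← sq, cls_sq hx]

end SquareClasses

section FiveTerm

variable {F}

lemma gen_one : gen F 1 = 0 :=
  (Submodule.Quotient.mk_eq_zero _).mpr (Submodule.subset_span (Or.inl (Or.inr rfl)))

lemma mk_single_eq_smul_gen (z : F) (r : GrpRing F) :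
    (Submodule.Quotient.mk (Finsupp.single z r) : RP F) = r • gen F z := by
  rw [gen, ← Submodule.Quotient.mk_smul, Finsupp.smul_single_one]

lemma gen_five_term {x y u v w : F} {c₁ c₂ c₃ : GrpRing F}
    (hx0 : x ≠ 0) (hx1 : x ≠ 1) (hy0 : y ≠ 0) (hy1 : y ≠ 1) (hxy : x ≠ y)
    (hu : y / x = u) (hv : (1 - x⁻¹) / (1 - y⁻¹) = v) (hw : (1 - x) / (1 - y) = w)
    (hc₁ : cls F x = c₁) (hc₂ : cls F (x⁻¹ - 1) = c₂) (hc₃ : cls F (1 - x) = c₃) :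
    gen F x - gen F y + c₁ • gen F u - c₂ • gen F v + c₃ • gen F w = 0 := by
  subst hu hv hw hc₁ hc₂ hc₃
  have hrel : _ ∈ refinedRels F := Or.inr ⟨x, y, hx0, hx1, hy0, hy1, hxy, rfl⟩
  have h := (Submodule.Quotient.mk_eq_zero _).mpr (Submodule.subset_span (R := GrpRing F) hrel)
  simpa only [Submodule.Quotient.mk_add, Submodule.Quotient.mk_sub, mk_single_eq_smul_gen,
    one_smul] using h

end FiveTerm

lemma inv_sub_one_div_inv_add_one {K : Type*} [Field K] {b : K} (hb : b ≠ 0) (hb' : b + 1 ≠ 0) :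
    (b⁻¹ - 1) / (b⁻¹ + 1) = -((b - 1) / (b + 1)) := by
  have : 1 + b ≠ 0 := by rwa [add_comm]
  field_simp
  ring

section Ordered

variable {R : Type} [Field R] [LinearOrder R] [IsStrictOrderedRing R]

lemma exists_pos_sq_eq (hsqrt : ∀ x : R, 0 < x → ∃ a : R, a ^ 2 = x) {x : R} (hx : 0 < x) :
    ∃ a : R, 0 < a ∧ a ^ 2 = x := by
  obtain ⟨a, rfl⟩ := hsqrt x hx
  exact ⟨|a|, abs_pos.2 (by rintro rfl; simp at hx), sq_abs a⟩

lemma cls_of_pos (hsqrt : ∀ x : R, 0 < x → ∃ a : R, a ^ 2 = x) {x : R} (hx : 0 < x) :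
    cls R x = 1 := by
  obtain ⟨a, ha, rfl⟩ := exists_pos_sq_eq hsqrt hx
  exact cls_sq ha.ne'

lemma cls_of_neg (hsqrt : ∀ x : R, 0 < x → ∃ a : R, a ^ 2 = x) {x : R} (hx : x < 0) :
    cls R x = cls R (-1) := by
  rw [← neg_neg x, ← neg_one_mul, cls_mul (by norm_num) (neg_pos.2 hx).ne',
    cls_of_pos hsqrt (neg_pos.2 hx), mul_one]

lemma cls_eq_of_mul_pos (hsqrt : ∀ x : R, 0 < x → ∃ a : R, a ^ 2 = x) {x y : R}
    (h : 0 < x * y) : cls R x = cls R y := by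
  rcases pos_and_pos_or_neg_and_neg_of_mul_pos h with ⟨hx, hy⟩ | ⟨hx, hy⟩
  · rw [cls_of_pos hsqrt hx, cls_of_pos hsqrt hy]
  · rw [cls_of_neg hsqrt hx, cls_of_neg hsqrt hy]

variable {b : R}

lemma gen_five_term_inv_self (hsqrt : ∀ x : R, 0 < x → ∃ a : R, a ^ 2 = x)
    (hb0 : 0 < b) (hb1 : b ≠ 1) :
    gen R b⁻¹ - gen R b + gen R (b ^ 2)
      - cls R (b - 1) • gen R (-b) + cls R (b - 1) • gen R (-b⁻¹) = 0 := by
  have hb : b ≠ 0 := hb0.ne'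
  have h1b : 1 - b ≠ 0 := sub_ne_zero.2 hb1.symm
  have h1bi : 1 - b⁻¹ ≠ 0 := sub_ne_zero.2 (by simpa [eq_comm] using hb1)
  simpa only [one_smul] using gen_five_term (inv_ne_zero hb) (by simpa using hb1) hb hb1
    (fun h => hb1 (by nlinarith [mul_inv_cancel₀ hb, h]))
    (by field_simp) (by rw [inv_inv, div_eq_iff h1bi]; field_simp; ring)
    (by rw [div_eq_iff h1b]; field_simp; ring)
    (cls_of_pos hsqrt (inv_pos.2 hb0)) (by rw [inv_inv])
    (cls_eq_of_mul_pos hsqrt (by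
      rw [show (1 - b⁻¹) * (b - 1) = (b - 1) ^ 2 / b by field_simp]
      have := sub_ne_zero.2 hb1
      positivity))

lemma gen_five_term_self_neg (hsqrt : ∀ x : R, 0 < x → ∃ a : R, a ^ 2 = x)
    (hb0 : 0 < b) (hb1 : b ≠ 1) :
    gen R b - gen R (-b) + gen R (-1)
      - cls R (1 - b) • gen R ((b - 1) / (b + 1)) + cls R (1 - b) • gen R (-((b - 1) / (b + 1)))
      = 0 := by
  have hb : b ≠ 0 := hb0.ne'
  have hb' : b + 1 ≠ 0 := by positivity
  simpa only [one_smul] using gen_five_term hb hb1 (neg_ne_zero.2 hb) (by linarith) (by linarith)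
    (by field_simp) (by simp only [inv_neg, sub_neg_eq_add]; field_simp)
    (by rw [sub_neg_eq_add, ← neg_div]; ring)
    (cls_of_pos hsqrt hb0)
    (cls_eq_of_mul_pos hsqrt (by
      rw [show (b⁻¹ - 1) * (1 - b) = (b - 1) ^ 2 / b by field_simp; ring]
      have := sub_ne_zero.2 hb1
      positivity))
    rfl

lemma gen_five_term_neg_self_neg_inv (hsqrt : ∀ x : R, 0 < x → ∃ a : R, a ^ 2 = x)
    (hb0 : 0 < b) (hb1 : b ≠ 1) :
    gen R (-b) - gen R (-b⁻¹) + cls R (-1) • gen R (b⁻¹ ^ 2) - cls R (-1) • gen R b⁻¹ + gen R b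
      = 0 := by
  have hb : b ≠ 0 := hb0.ne'
  have hb' : 1 + b ≠ 0 := by positivity
  simpa only [one_smul] using gen_five_term (neg_ne_zero.2 hb) (by linarith)
    (neg_ne_zero.2 (inv_ne_zero hb)) (by linarith [inv_pos.2 hb0])
    (fun h => hb1 (by nlinarith [mul_inv_cancel₀ hb, h]))
    (by field_simp) (by simp only [inv_neg, sub_neg_eq_add, inv_inv]; field_simp; ring)
    (by simp only [sub_neg_eq_add]; field_simp; ring)
    (cls_of_neg hsqrt (by linarith))
    (cls_of_neg hsqrt (by rw [inv_neg]; linarith [inv_pos.2 hb0]))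
    (cls_of_pos hsqrt (by linarith))

lemma cls_neg_one_smul_gen_sq_of_lt_one (hsqrt : ∀ x : R, 0 < x → ∃ a : R, a ^ 2 = x)
    {a : R} (ha0 : 0 < a) (ha1 : a < 1) :
    cls R (-1) • gen R (a ^ 2) = gen R (a ^ 2) := by
  have hai : 1 < a⁻¹ := one_lt_inv₀ ha0 |>.2 ha1
  have h1 := gen_five_term_inv_self hsqrt ha0 ha1.ne
  have h2 := gen_five_term_self_neg hsqrt ha0 ha1.ne
  have h3 := gen_five_term_self_neg hsqrt (inv_pos.2 ha0) hai.ne'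
  rw [cls_of_neg hsqrt (by linarith)] at h1
  rw [cls_of_pos hsqrt (by linarith), one_smul, one_smul] at h2
  rw [cls_of_neg hsqrt (by linarith), inv_sub_one_div_inv_add_one ha0.ne' (by positivity),
    neg_neg] at h3
  have hε := cls_mul_self (by norm_num : (-1 : R) ≠ 0)
  linear_combination (norm := module) (cls R (-1) - 1) • (h1 + h2 - h3)
    + hε • (gen R (-a) - gen R (-a⁻¹)
      + gen R ((a - 1) / (a + 1)) - gen R (-((a - 1) / (a + 1))))

lemma cls_neg_one_smul_gen_of_lt_one (hsqrt : ∀ x : R, 0 < x → ∃ a : R, a ^ 2 = x)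
    {x : R} (hx0 : 0 < x) (hx1 : x < 1) :
    cls R (-1) • gen R x = gen R x := by
  obtain ⟨a, ha0, rfl⟩ := exists_pos_sq_eq hsqrt hx0
  exact cls_neg_one_smul_gen_sq_of_lt_one hsqrt ha0
    ((pow_lt_one_iff_of_nonneg ha0.le two_ne_zero).1 hx1)

lemma cls_neg_one_smul_gen_sq_of_one_lt (hsqrt : ∀ x : R, 0 < x → ∃ a : R, a ^ 2 = x)
    {a : R} (ha1 : 1 < a) :
    cls R (-1) • gen R (a ^ 2) = gen R (a ^ 2) := by
  have ha0 : 0 < a := by linarith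
  have hai : a⁻¹ < 1 := inv_lt_one_of_one_lt₀ ha1
  have hfix := cls_neg_one_smul_gen_of_lt_one hsqrt (inv_pos.2 ha0) hai
  have h1 := gen_five_term_inv_self hsqrt ha0 ha1.ne'
  have h2 := gen_five_term_self_neg hsqrt ha0 ha1.ne'
  have h3 := gen_five_term_self_neg hsqrt (inv_pos.2 ha0) hai.ne
  have h4 := gen_five_term_inv_self hsqrt (inv_pos.2 ha0) hai.ne
  have h5 := gen_five_term_neg_self_neg_inv hsqrt ha0 ha1.ne'
  rw [cls_of_pos hsqrt (by linarith), one_smul, one_smul] at h1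
  rw [cls_of_neg hsqrt (by linarith)] at h2
  rw [cls_of_pos hsqrt (by linarith), one_smul, one_smul,
    inv_sub_one_div_inv_add_one ha0.ne' (by positivity), neg_neg] at h3
  rw [cls_of_neg hsqrt (by linarith), inv_inv] at h4
  have hε := cls_mul_self (by norm_num : (-1 : R) ≠ 0)
  linear_combination (norm := module) (cls R (-1) - 1) • (h4 + h1 - h2 + h3 + h5) - 2 • hfix
    + hε • (gen R a⁻¹ - gen R (a⁻¹ ^ 2)
      - gen R (-a) + gen R (-a⁻¹) - gen R ((a - 1) / (a + 1)) + gen R (-((a - 1) / (a + 1))))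

end Ordered

/-- If `R` is a real quadratically closed field and `x > 0`, then `⟨-1⟩[x] = [x]` in the
refined pre-Bloch group `RP(R)`. -/
theorem cls_neg_one_smul_gen_pos (R : Type) [Field R] [LinearOrder R] [IsStrictOrderedRing R]
    (hRQC : ∀ x : R, 0 < x → ∃ a : R, a ^ 2 = x)
    (x : R) (hx : 0 < x) :
    cls R (-1) • gen R x = gen R x := by
  rcases lt_trichotomy x 1 with h | rfl | h
  · exact cls_neg_one_smul_gen_of_lt_one hRQC hx h
  · rw [gen_one, smul_zero]
  · obtain ⟨a, ha0, rfl⟩ := exists_pos_sq_eq hRQC hx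
    exact cls_neg_one_smul_gen_sq_of_one_lt hRQC
      ((one_lt_pow_iff_of_nonneg ha0.le two_ne_zero).1 h)
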